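/- For the GHZ state ψ = (1/√d) ∑_j |jjj⟩, any splitting H_C = H_{C_L} ⊗ H_{C_R} and any purification U_C ψ of ρ_AB satisfies S(AC_L) ≥ log d, with equality achievable; consequently E_P(A:B) = log d and g(A:B) = 2 log d − log d = log d. -/

import Mathlib

open scoped Classical ComplexOrder

/-- von Neumann entropy of a (Hermitian) matrix, via its spectrum. -/
noncomputable def vnEntropy {n : Type*} [Fintype n] [DecidableEq n]
    (ρ : Matrix n n ℂ) : ℝ :=
  if h : ρ.IsHermitian then -∑ i, h.eigenvalues i * Real.log (h.eigenvalues i) else 0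

/-- Reduced density matrix of a bipartite pure state `ψ : α × β → ℂ` on `α`. -/
noncomputable def redDM {α β : Type*} [Fintype β] (ψ : α × β → ℂ) : Matrix α α ℂ :=
  Matrix.of fun a a' => ∑ b, ψ (a, b) * (starRingEnd ℂ) (ψ (a', b))

/-- Entanglement entropy of the subsystem `α` for the bipartite pure state `ψ`. -/
noncomputable def SE {α β : Type*} [Fintype α] [DecidableEq α] [Fintype β]
    (ψ : α × β → ℂ) : ℝ := vnEntropy (redDM ψ)

/-- Reduced density matrix `ρ_AB` of a tripartite pure state. -/
noncomputable def rhoAB {nA nB nC : ℕ} (ψ : Fin nA × Fin nB × Fin nC → ℂ) :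
    Matrix (Fin nA × Fin nB) (Fin nA × Fin nB) ℂ :=
  Matrix.of fun p q =>
    ∑ c, ψ (p.1, p.2, c) * (starRingEnd ℂ) (ψ (q.1, q.2, c))

/-- The GHZ state `(1/√d) ∑ⱼ |jjj⟩` on `(ℂ^d)^{⊗3}`. -/
noncomputable def ghz (d : ℕ) : Fin d × Fin d × Fin d → ℂ :=
  fun p => if p.1 = p.2.1 ∧ p.2.1 = p.2.2 then ((Real.sqrt d)⁻¹ : ℂ) else 0


/-!
Since `ρ_AB = (1/d) ∑ⱼ |jj⟩⟨jj|` has no weight off the diagonal `a = b`, every purification `φ`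
vanishes there, so the reduced state on `A C_L` is block diagonal in `a`, each block being a
positive matrix of trace `1/d`. A positive matrix is bounded by its trace (Cauchy–Schwarz), so
every eigenvalue of `ρ_{AC_L}` is at most `1/d`, and a spectrum of total mass `1` bounded by `1/d`
has entropy at least `log d`. Equality holds with `C_L` trivial: then `ρ_{AC_L} = ρ_A = 𝟙/d`.
-/

open Matrix ComplexConjugate

section ReducedDensityMatrix

variable {α β : Type*} [Fintype β]

lemma redDM_eq_mul_conjTranspose (ψ : α × β → ℂ) :
    redDM ψ = of (Function.curry ψ) * (of (Function.curry ψ))ᴴ := by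
  ext a a'
  simp [redDM, mul_apply]

variable [Fintype α]

lemma posSemidef_redDM (ψ : α × β → ℂ) : (redDM ψ).PosSemidef := by
  rw [redDM_eq_mul_conjTranspose]
  exact posSemidef_self_mul_conjTranspose _

lemma trace_redDM (ψ : α × β → ℂ) : (redDM ψ).trace = ∑ x, (Complex.normSq (ψ x) : ℂ) := by
  simp [trace, redDM, Complex.mul_conj, Fintype.sum_prod_type]

lemma dotProduct_redDM_mulVec (ψ : α × β → ℂ) (v : α → ℂ) :
    star v ⬝ᵥ redDM ψ *ᵥ v = ∑ b, (Complex.normSq (∑ a, conj (ψ (a, b)) * v a) : ℂ) := by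
  rw [redDM_eq_mul_conjTranspose, ← mulVec_mulVec, dotProduct_mulVec,
    ← conjTranspose_conjTranspose (of (Function.curry ψ)), ← star_mulVec,
    conjTranspose_conjTranspose]
  refine Finset.sum_congr rfl fun b _ => ?_
  simp [Complex.normSq_eq_conj_mul_self, mulVec, dotProduct, mul_comm]

end ReducedDensityMatrix

lemma Complex.normSq_sum_mul_le {ι : Type*} (s : Finset ι) (f g : ι → ℂ) :
    Complex.normSq (∑ i ∈ s, f i * g i) ≤
      (∑ i ∈ s, Complex.normSq (f i)) * ∑ i ∈ s, Complex.normSq (g i) := by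
  simp only [Complex.normSq_eq_norm_sq]
  calc ‖∑ i ∈ s, f i * g i‖ ^ 2 ≤ (∑ i ∈ s, ‖f i‖ * ‖g i‖) ^ 2 := by
        gcongr
        exact (norm_sum_le _ _).trans_eq (by simp)
    _ ≤ _ := Finset.sum_mul_sq_le_sq_mul_sq _ _ _

section Spectrum

variable {n : Type*} [Fintype n] [DecidableEq n]

lemma Matrix.IsHermitian.eigenvalues_le_of_re_dotProduct_mulVec_le {A : Matrix n n ℂ}
    (hA : A.IsHermitian) {c : ℝ}
    (h : ∀ v, RCLike.re (star v ⬝ᵥ A *ᵥ v) ≤ c * ∑ i, Complex.normSq (v i)) (i : n) :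
    hA.eigenvalues i ≤ c := by
  have hunit : ∑ j, Complex.normSq (hA.eigenvectorBasis i j) = 1 := by
    have := hA.eigenvectorBasis.orthonormal.1 i
    rw [EuclideanSpace.norm_eq, Real.sqrt_eq_one] at this
    simpa [Complex.normSq_eq_norm_sq] using this
  simpa [hA.eigenvalues_eq i, hunit] using h (hA.eigenvectorBasis i)

lemma Matrix.IsHermitian.eigenvalues_smul_one {c : ℝ}
    (h : ((c : ℂ) • (1 : Matrix n n ℂ)).IsHermitian) (i : n) : h.eigenvalues i = c := by
  have : Nonempty n := ⟨i⟩
  have hc : (c : ℂ) • (1 : Matrix n n ℂ) = algebraMap ℝ _ c := by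
    rw [Algebra.algebraMap_eq_smul_one, Complex.coe_smul]
  simpa [hc, spectrum.scalar_eq] using h.eigenvalues_mem_spectrum_real i

end Spectrum

section Entropy

variable {n : Type*} [Fintype n] [DecidableEq n]

lemma vnEntropy_eq_sum_negMulLog {ρ : Matrix n n ℂ} (h : ρ.IsHermitian) :
    vnEntropy ρ = ∑ i, Real.negMulLog (h.eigenvalues i) := by
  simp [vnEntropy, h, Real.negMulLog]

lemma neg_log_le_vnEntropy {ρ : Matrix n n ℂ} (hρ : ρ.PosSemidef) (htr : ρ.trace = 1) {c : ℝ}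
    (hc : ∀ i, hρ.1.eigenvalues i ≤ c) : -Real.log c ≤ vnEntropy ρ := by
  have hsum : ∑ i, hρ.1.eigenvalues i = 1 := by
    have := hρ.1.trace_eq_sum_eigenvalues
    rw [htr, ← RCLike.ofReal_sum] at this
    exact RCLike.ofReal_injective (K := ℂ) (by simpa using this.symm)
  rw [vnEntropy_eq_sum_negMulLog hρ.1]
  calc -Real.log c = ∑ i, hρ.1.eigenvalues i * -Real.log c := by
        rw [← Finset.sum_mul, hsum, one_mul]
    _ ≤ _ := Finset.sum_le_sum fun i _ => ?_
  rw [Real.negMulLog, neg_mul, ← mul_neg]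
  rcases (hρ.eigenvalues_nonneg i).eq_or_lt with h0 | hpos
  · simp [← h0]
  · exact mul_le_mul_of_nonneg_left (neg_le_neg (Real.log_le_log hpos (hc i))) hpos.le

lemma vnEntropy_smul_one (c : ℝ) :
    vnEntropy ((c : ℂ) • (1 : Matrix n n ℂ)) = Fintype.card n * Real.negMulLog c := by
  have h : ((c : ℂ) • (1 : Matrix n n ℂ)).IsHermitian :=
    isHermitian_one.smul (Complex.conj_ofReal c)
  rw [vnEntropy_eq_sum_negMulLog h]
  simp [h.eigenvalues_smul_one]

end Entropy

lemma re_dotProduct_redDM_mulVec_le_of_blockDiagonal {ι κ μ : Type*} [Fintype ι] [Fintype κ]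
    [Fintype μ] (Φ : (ι × κ) × (ι × μ) → ℂ) (hΦ : ∀ a b l r, a ≠ b → Φ ((a, l), (b, r)) = 0)
    {c : ℝ} (hc : ∀ a, ∑ l, ∑ r, Complex.normSq (Φ ((a, l), (a, r))) ≤ c) (v : ι × κ → ℂ) :
    RCLike.re (star v ⬝ᵥ redDM Φ *ᵥ v) ≤ c * ∑ x, Complex.normSq (v x) := by
  have hblock : ∀ b r,
      ∑ x, conj (Φ (x, (b, r))) * v x = ∑ l, conj (Φ ((b, l), (b, r))) * v (b, l) := by
    intro b r
    rw [Fintype.sum_prod_type, Finset.sum_eq_single b (fun a _ hab => by simp [hΦ a b _ r hab])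
      (by simp)]
  rw [dotProduct_redDM_mulVec, ← Complex.ofReal_sum, RCLike.re_to_complex, Complex.ofReal_re]
  calc ∑ y, Complex.normSq (∑ x, conj (Φ (x, y)) * v x)
      ≤ ∑ b, ∑ r, (∑ l, Complex.normSq (Φ ((b, l), (b, r)))) * ∑ l, Complex.normSq (v (b, l)) := by
        rw [Fintype.sum_prod_type]
        gcongr with b _ r _
        simpa [hblock] using Complex.normSq_sum_mul_le _ (fun l => conj (Φ ((b, l), (b, r)))) _
    _ = ∑ b, (∑ l, ∑ r, Complex.normSq (Φ ((b, l), (b, r)))) * ∑ l, Complex.normSq (v (b, l)) := by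
        simp only [← Finset.sum_mul, Finset.sum_comm (γ := μ)]
    _ ≤ ∑ b, c * ∑ l, Complex.normSq (v (b, l)) := by
        gcongr with b
        exacts [Finset.sum_nonneg fun _ _ => Complex.normSq_nonneg _, hc b]
    _ = c * ∑ x, Complex.normSq (v x) := by rw [← Finset.mul_sum, Fintype.sum_prod_type]

lemma ghz_mul_conj_ghz (d : ℕ) (x y : Fin d × Fin d × Fin d) :
    ghz d x * conj (ghz d y) =
      if x.1 = x.2.1 ∧ x.2.1 = x.2.2 ∧ y.1 = y.2.1 ∧ y.2.1 = y.2.2 then (d : ℂ)⁻¹ else 0 := by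
  have hsq : ((Real.sqrt d)⁻¹ : ℂ) * conj ((Real.sqrt d)⁻¹ : ℂ) = (d : ℂ)⁻¹ := by
    rw [map_inv₀, Complex.conj_ofReal, ← mul_inv, ← Complex.ofReal_mul,
      Real.mul_self_sqrt d.cast_nonneg, Complex.ofReal_natCast]
  unfold ghz
  split_ifs <;> simp_all

lemma rhoAB_ghz (d : ℕ) (p q : Fin d × Fin d) :
    rhoAB (ghz d) p q = if p.1 = p.2 ∧ p = q then (d : ℂ)⁻¹ else 0 := by
  simp only [rhoAB, of_apply, ghz_mul_conj_ghz]
  obtain ⟨a, b⟩ := p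
  obtain ⟨a', b'⟩ := q
  dsimp only
  by_cases h : a = b ∧ (a, b) = (a', b')
  · obtain ⟨rfl, hq⟩ := h
    obtain ⟨rfl, rfl⟩ := Prod.ext_iff.mp hq
    simp
  · rw [if_neg h]
    refine Finset.sum_eq_zero fun c _ => if_neg ?_
    rintro ⟨rfl, rfl, rfl, rfl⟩
    exact h ⟨rfl, rfl⟩

section Purification

variable {α β γ δ : Type*} [Fintype γ] [Fintype δ]

def IsPurification (φ : α × β × γ × δ → ℂ) (ρ : Matrix (α × β) (α × β) ℂ) : Prop :=
  ∀ p q : α × β, ∑ l, ∑ r, φ (p.1, p.2, l, r) * conj (φ (q.1, q.2, l, r)) = ρ p q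

def regroupACL (φ : α × β × γ × δ → ℂ) : (α × γ) × (β × δ) → ℂ :=
  fun p => φ (p.1.1, p.2.1, p.1.2, p.2.2)

lemma IsPurification.sum_normSq {φ : α × β × γ × δ → ℂ} {ρ : Matrix (α × β) (α × β) ℂ}
    (hφ : IsPurification φ ρ) (p : α × β) :
    ∑ l, ∑ r, (Complex.normSq (φ (p.1, p.2, l, r)) : ℂ) = ρ p p := by
  simpa [Complex.mul_conj] using hφ p p

lemma IsPurification.trace_redDM_regroupACL [Fintype α] [Fintype β] {φ : α × β × γ × δ → ℂ}
    {ρ : Matrix (α × β) (α × β) ℂ} (hφ : IsPurification φ ρ) :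
    (redDM (regroupACL φ)).trace = ρ.trace := by
  rw [trace_redDM, trace]
  simp only [diag_apply, ← hφ.sum_normSq, Fintype.sum_prod_type, regroupACL]
  exact Finset.sum_congr rfl fun a _ => Finset.sum_comm

end Purification

section GHZ

variable {d nL nR : ℕ} {φ : Fin d × Fin d × Fin nL × Fin nR → ℂ}

lemma trace_rhoAB_ghz (hd : 0 < d) : (rhoAB (ghz d)).trace = 1 := by
  simp [trace, rhoAB_ghz, Fintype.sum_prod_type, hd.ne']

lemma sum_normSq_of_isPurification_ghz (hφ : IsPurification φ (rhoAB (ghz d))) (a b : Fin d) :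
    ∑ l, ∑ r, Complex.normSq (φ (a, b, l, r)) = if a = b then (d : ℝ)⁻¹ else 0 := by
  apply Complex.ofReal_injective
  push_cast
  rw [hφ.sum_normSq (a, b), rhoAB_ghz]
  split_ifs <;> simp_all

lemma apply_eq_zero_of_isPurification_ghz (hφ : IsPurification φ (rhoAB (ghz d))) {a b : Fin d}
    (hab : a ≠ b) (l : Fin nL) (r : Fin nR) : φ (a, b, l, r) = 0 := by
  have h := sum_normSq_of_isPurification_ghz hφ a b
  rw [if_neg hab, Finset.sum_eq_zero_iff_of_nonneg fun l _ =>
    Finset.sum_nonneg fun r _ => Complex.normSq_nonneg _] at h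
  have hl := h l (Finset.mem_univ _)
  rw [Finset.sum_eq_zero_iff_of_nonneg fun r _ => Complex.normSq_nonneg _] at hl
  exact Complex.normSq_eq_zero.mp (hl r (Finset.mem_univ _))

theorem log_le_SE_regroupACL_of_isPurification_ghz (hd : 0 < d)
    (hφ : IsPurification φ (rhoAB (ghz d))) : Real.log d ≤ SE (regroupACL φ) := by
  have hρ := posSemidef_redDM (regroupACL φ)
  have htr : (redDM (regroupACL φ)).trace = 1 := by
    rw [hφ.trace_redDM_regroupACL, trace_rhoAB_ghz hd]
  have hle : ∀ i, hρ.1.eigenvalues i ≤ (d : ℝ)⁻¹ :=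
    hρ.1.eigenvalues_le_of_re_dotProduct_mulVec_le <|
      re_dotProduct_redDM_mulVec_le_of_blockDiagonal _
        (fun _ _ l r hab => apply_eq_zero_of_isPurification_ghz hφ hab l r)
        (fun a => (sum_normSq_of_isPurification_ghz hφ a a).trans_le (by simp))
  simpa [SE] using neg_log_le_vnEntropy hρ htr hle

lemma isPurification_trivialCL {nA nB nC : ℕ} (ψ : Fin nA × Fin nB × Fin nC → ℂ) :
    IsPurification (fun x : Fin nA × Fin nB × Fin 1 × Fin nC => ψ (x.1, x.2.1, x.2.2.2))
      (rhoAB ψ) := by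
  intro p q
  simp [rhoAB]

lemma redDM_regroupACL_ghz_trivialCL (d : ℕ) :
    redDM (regroupACL fun x : Fin d × Fin d × Fin 1 × Fin d => ghz d (x.1, x.2.1, x.2.2.2)) =
      (((d : ℝ)⁻¹ : ℝ) : ℂ) • 1 := by
  ext ⟨a, l⟩ ⟨a', l'⟩
  obtain rfl := Subsingleton.elim l l'
  rcases eq_or_ne a a' with rfl | h
  · simp [redDM, regroupACL, ghz_mul_conj_ghz, Fintype.sum_prod_type, ite_and]
  · simp [redDM, regroupACL, ghz_mul_conj_ghz, Fintype.sum_prod_type, ite_and, h, h.symm]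

theorem SE_regroupACL_ghz_trivialCL (hd : 0 < d) :
    SE (regroupACL fun x : Fin d × Fin d × Fin 1 × Fin d => ghz d (x.1, x.2.1, x.2.2.2)) =
      Real.log d := by
  rw [SE, redDM_regroupACL_ghz_trivialCL, vnEntropy_smul_one]
  simp [Real.negMulLog, hd.ne']

end GHZ

/-- For the GHZ state, every purification `φ` of
`ρ_AB = (1/d) ∑ⱼ |jj⟩⟨jj|` to any auxiliary system `C_L ⊗ C_R` has
`S(A C_L) ≥ log d`, with equality achievable; consequently `E_P(A:B) = log d`
and `g(A:B) = 2 log d − log d = log d`. -/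
theorem ghz_entanglement_of_purification (d : ℕ) (hd : 0 < d) :
    (∀ (nL nR : ℕ) (φ : Fin d × Fin d × Fin nL × Fin nR → ℂ),
        (∀ p q : Fin d × Fin d,
          (∑ l : Fin nL, ∑ r : Fin nR,
              φ (p.1, p.2, l, r) * (starRingEnd ℂ) (φ (q.1, q.2, l, r))) =
            rhoAB (ghz d) p q) →
        Real.log d ≤
          SE (fun p : (Fin d × Fin nL) × (Fin d × Fin nR) =>
            φ (p.1.1, p.2.1, p.1.2, p.2.2))) ∧
    (∃ (nL nR : ℕ) (φ : Fin d × Fin d × Fin nL × Fin nR → ℂ),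
        (∀ p q : Fin d × Fin d,
          (∑ l : Fin nL, ∑ r : Fin nR,
              φ (p.1, p.2, l, r) * (starRingEnd ℂ) (φ (q.1, q.2, l, r))) =
            rhoAB (ghz d) p q) ∧
        SE (fun p : (Fin d × Fin nL) × (Fin d × Fin nR) =>
            φ (p.1.1, p.2.1, p.1.2, p.2.2)) = Real.log d) :=
  ⟨fun _ _ _ hφ => log_le_SE_regroupACL_of_isPurification_ghz hd hφ,
    1, d, fun x => ghz d (x.1, x.2.1, x.2.2.2), isPurification_trivialCL (ghz d),
    SE_regroupACL_ghz_trivialCL hd⟩
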